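/- arXiv:1511.01766 — 4 statements merged into one kernel-verified Lean document; each statement's English description precedes it below -/
import Mathlib

section
/- Let L/K be a finite Galois extension of fields with abelian Galois group G, M a positive integer, and suppose L contains no nontrivial M-th root of unity (equivalently μ_M(L) = 1). Then the inclusion K^× ↪ L^× induces an isomorphism K^×/(K^×)^M ≅ (L^×/(L^×)^M)^G between the M-power quotient of K^× and the G-invariants of the M-power quotient of L^×. -/
/-!
If `μ_M(L) = 1`, raising to the `M`-th power is injective on `Lˣ`. Hence an element of `K^×`
that is an `M`-th power `b^M` in `L^×` has its root `b` fixed by `G`, so `b ∈ K^×`. For a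
`G`-invariant class `x (L^×)^M`, the unique roots `y σ` of `σ x / x` form a `1`-cocycle; by
Hilbert 90 it is the coboundary of some `z`, and then `x / z^M` is `G`-invariant, hence in `K^×`.
-/

open groupCohomology

theorem pow_left_injective_of_pow_eq_one {A : Type*} [CommGroup A] {M : ℕ}
    (h : ∀ x : A, x ^ M = 1 → x = 1) : Function.Injective (· ^ M : A → A) :=
  fun u v huv => div_eq_one.mp (h _ (by simp only [div_pow, huv, div_self']))

section KummerCocycle

variable {G A : Type*} [Monoid G] [CommGroup A] [MulDistribMulAction G A] {M : ℕ}

theorem isMulCocycle₁_of_pow_eq_smul_div (hinj : Function.Injective (· ^ M : A → A))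
    {x : A} {y : G → A} (hy : ∀ g, y g ^ M = g • x / x) : IsMulCocycle₁ y := by
  intro g h
  apply hinj
  simp only [mul_pow, ← smul_pow', hy, mul_smul, smul_div', div_mul_div_cancel]

theorem smul_div_pow_eq_of_isMulCoboundary {x z : A} {y : G → A}
    (hy : ∀ g, y g ^ M = g • x / x) (hz : ∀ g, g • z / z = y g) (g : G) :
    g • (x / z ^ M) = x / z ^ M := by
  have hxg : g • x = y g ^ M * x := by rw [hy, div_mul_cancel]
  have hzg : g • z = y g * z := by rw [← hz, div_mul_cancel]
  rw [smul_div', smul_pow', hxg, hzg, mul_pow, mul_div_mul_left_eq_div]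

end KummerCocycle

section Galois

variable {K L : Type*} [Field K] [Field L] [Algebra K L] [FiniteDimensional K L] [IsGalois K L]

theorem exists_units_algebraMap_eq_of_forall_smul_eq (u : Lˣ)
    (hu : ∀ σ : L ≃ₐ[K] L, σ • u = u) : ∃ a : Kˣ, algebraMap K L a = u := by
  obtain ⟨a, ha⟩ :=
    (IsGalois.mem_range_algebraMap_iff_fixed (u : L)).2 fun σ => congrArg Units.val (hu σ)
  have ha0 : a ≠ 0 := by
    rintro rfl
    exact u.ne_zero (by simpa using ha.symm)
  exact ⟨Units.mk0 a ha0, ha⟩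

end Galois

theorem stmt6_general (K L : Type*) [Field K] [Field L] [Algebra K L] [FiniteDimensional K L]
    [IsGalois K L]
    (M : ℕ) (hμ : ∀ x : L, x ^ M = 1 → x = 1) :
    (∀ a : Kˣ, (∃ b : Lˣ, algebraMap K L (a : K) = (b : L) ^ M) →
        ∃ c : Kˣ, a = c ^ M) ∧
      (∀ x : Lˣ, (∀ σ : L ≃ₐ[K] L, ∃ y : Lˣ, σ (x : L) / (x : L) = (y : L) ^ M) →
        ∃ (a : Kˣ) (y : Lˣ), (x : L) = algebraMap K L (a : K) * (y : L) ^ M) := by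
  have hinj : Function.Injective (· ^ M : Lˣ → Lˣ) := pow_left_injective_of_pow_eq_one
    fun x hx => Units.ext (hμ x (by simpa using congrArg Units.val hx))
  constructor
  · rintro a ⟨b, hb⟩
    have hfix (σ : L ≃ₐ[K] L) : σ • b = b := hinj <| Units.ext <| by
      change σ (b : L) ^ M = (b : L) ^ M
      rw [← map_pow, ← hb, σ.commutes]
    obtain ⟨c, hc⟩ := exists_units_algebraMap_eq_of_forall_smul_eq b hfix
    refine ⟨c, Units.ext ((algebraMap K L).injective ?_)⟩
    simp [hb, hc]
  · intro x hx
    choose y hy using hx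
    have hy : ∀ σ : L ≃ₐ[K] L, y σ ^ M = σ • x / x := fun σ => Units.ext (by simp [hy])
    obtain ⟨z, hz⟩ := isMulCoboundary₁_of_isMulCocycle₁_of_aut_to_units y
      (isMulCocycle₁_of_pow_eq_smul_div hinj hy)
    obtain ⟨a, ha⟩ := exists_units_algebraMap_eq_of_forall_smul_eq _
      (smul_div_pow_eq_of_isMulCoboundary hy hz)
    exact ⟨a, z, by simp [ha]⟩

/-- Let `L/K` be a finite Galois extension with abelian Galois group `G`, `M ≥ 1`, and
suppose `L` has no nontrivial `M`-th roots of unity.  Then `K^×/(K^×)^M` maps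
isomorphically onto the `G`-invariants of `L^×/(L^×)^M`: the induced map is injective
(an element of `K^×` that is an `M`-th power in `L^×` is an `M`-th power in `K^×`),
and every class in `L^×/(L^×)^M` fixed by all of `G` comes from `K^×`. -/
theorem stmt6 (K L : Type*) [Field K] [Field L] [Algebra K L] [FiniteDimensional K L]
    [IsGalois K L] (hab : ∀ σ τ : L ≃ₐ[K] L, σ * τ = τ * σ)
    (M : ℕ) (hM : 0 < M) (hμ : ∀ x : L, x ^ M = 1 → x = 1) :
    (∀ a : Kˣ, (∃ b : Lˣ, algebraMap K L (a : K) = (b : L) ^ M) →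
        ∃ c : Kˣ, a = c ^ M) ∧
      (∀ x : Lˣ, (∀ σ : L ≃ₐ[K] L, ∃ y : Lˣ, σ (x : L) / (x : L) = (y : L) ^ M) →
        ∃ (a : Kˣ) (y : Lˣ), (x : L) = algebraMap K L (a : K) * (y : L) ^ M) :=
  stmt6_general K L M hμ
end

section
/- Let Λ = ℤ_p[[X]] (or more generally a Noetherian local integral domain), and let a₁, a₂ ∈ Λ with a₁ | a₂. Suppose for every n ≥ 0, setting Λ_n := Λ/((1+X)^{p^n} - 1), the cardinalities #(Λ/a₁Λ ⊗_Λ Λ_n) and #(Λ/a₂Λ ⊗_Λ Λ_n) are finite and their ratio is bounded above and below independently of n. Then a₁Λ = a₂Λ. -/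
/-!
Write `a₂ = a₁ * b` and `ωₙ = (1 + X) ^ p ^ n - 1`, and let `Iₙ = (a₁ b, ωₙ)`. Multiplication by
`a₁` embeds `Λ ⧸ (Iₙ : a₁)` into `(a₁, ωₙ) ⧸ Iₙ`, whose order is the bounded ratio, so the
decreasing colon ideals `(Iₙ : a₁)` have bounded index and therefore stabilise from some `N` on.
Then `ω_N a₁ ∈ Iₙ ⊆ (a₁ b) + 𝔪ⁿ` for every `n`, and Krull's intersection theorem gives
`a₁ b ∣ ω_N a₁`, i.e. `b ∣ ω_N`. Hence `Λ ⧸ (b)` is finite; by pigeonhole `b` then divides a power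
of `p` and a power of the prime `X`, which forces `b` to be a unit.
-/

open IsLocalRing PowerSeries

theorem AddSubgroup.exists_eq_of_antitone_of_index_le {G : Type*} [AddGroup G]
    {K : ℕ → AddSubgroup G} (hK : Antitone K) (hK0 : ∀ n, (K n).index ≠ 0) {C : ℕ}
    (hC : ∀ n, (K n).index ≤ C) : ∃ N, ∀ n ≥ N, K n = K N := by
  have hbdd : BddAbove (Set.range fun n => (K n).index) := ⟨C, by rintro _ ⟨n, rfl⟩; exact hC n⟩
  obtain ⟨N, hN⟩ := Nat.sSup_mem (Set.range_nonempty _) hbdd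
  refine ⟨N, fun n hn => le_antisymm (hK hn) ?_⟩
  have hmax : (K n).index ≤ (K N).index := (le_csSup hbdd ⟨n, rfl⟩).trans_eq hN.symm
  have hmono : (K N).index ≤ (K n).index :=
    Nat.le_of_dvd (Nat.pos_of_ne_zero (hK0 n)) (index_dvd_of_le (hK hn))
  rw [← relIndex_eq_one]
  refine Nat.eq_of_mul_eq_mul_right (Nat.pos_of_ne_zero (hK0 N)) ?_
  rw [relIndex_mul_index (hK hn), one_mul]
  exact le_antisymm hmax hmono

theorem Ideal.card_quotient_colon_singleton_le {R : Type*} [CommRing R] {I J : Ideal R}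
    [Finite (R ⧸ I)] (hIJ : I ≤ J) {a : R} (ha : a ∈ J) {C : ℕ}
    (hC : Nat.card (R ⧸ I) ≤ C * Nat.card (R ⧸ J)) :
    Nat.card (R ⧸ I.colon {a}) ≤ C := by
  have hcomap : (I.colon {a}).toAddSubgroup =
      I.toAddSubgroup.comap (AddMonoidHom.mulRight a) := by
    ext x
    simp [Submodule.mem_colon_singleton]
  have hrange : (AddMonoidHom.mulRight a).range ≤ J.toAddSubgroup := by
    rintro _ ⟨x, rfl⟩
    exact J.mul_mem_left x ha
  have hmul := AddSubgroup.relIndex_mul_index (show I.toAddSubgroup ≤ J.toAddSubgroup from hIJ)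
  have hI0 : I.toAddSubgroup.index ≠ 0 :=
    AddSubgroup.index_ne_zero_of_finite (hH := ‹Finite (R ⧸ I)›)
  have hJ0 : J.toAddSubgroup.index ≠ 0 := right_ne_zero_of_mul (hmul ▸ hI0)
  have hrel : I.toAddSubgroup.relIndex J.toAddSubgroup ≤ C :=
    Nat.le_of_mul_le_mul_right (hmul.trans_le hC) (Nat.pos_of_ne_zero hJ0)
  change (I.colon {a}).toAddSubgroup.index ≤ C
  rw [hcomap, AddSubgroup.index_comap]
  exact (AddSubgroup.relIndex_le_of_le_right hrange (left_ne_zero_of_mul (hmul ▸ hI0))).trans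
    hrel

namespace IsLocalRing

variable {R : Type*} [CommRing R] [IsLocalRing R]

theorem mem_of_forall_mem_sup_maximalIdeal_pow [IsNoetherianRing R] {I : Ideal R} {x : R}
    (hx : ∀ n : ℕ, x ∈ I ⊔ maximalIdeal R ^ n) : x ∈ I := by
  have krull := Ideal.iInf_pow_smul_eq_bot_of_isLocalRing (M := R ⧸ I) (maximalIdeal R)
    (maximalIdeal.isMaximal R).ne_top
  rw [← Ideal.Quotient.eq_zero_iff_mem, ← Submodule.mem_bot R, ← krull, Submodule.mem_iInf]
  intro n
  obtain ⟨y, hy, z, hz, rfl⟩ := Submodule.mem_sup.mp (hx n)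
  have hyz : Ideal.Quotient.mk I (y + z) = z • (1 : R ⧸ I) := by
    simp [Ideal.Quotient.eq_zero_iff_mem.mpr hy, Algebra.smul_def]
  rw [hyz]
  exact Submodule.smul_mem_smul hz Submodule.mem_top

theorem exists_pow_mem_of_finite_quotient {I : Ideal R} [Finite (R ⧸ I)] {r : R}
    (hr : r ∈ maximalIdeal R) : ∃ i, r ^ i ∈ I := by
  obtain ⟨i, j, hij, heq⟩ :=
    Finite.exists_ne_map_eq_of_infinite fun n : ℕ => Ideal.Quotient.mk I (r ^ n)
  wlog hlt : i < j generalizing i j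
  · exact this j i hij.symm heq.symm (by omega)
  have hunit : IsUnit (1 - r ^ (j - i)) :=
    isUnit_one_sub_self_of_mem_nonunits _ (Ideal.pow_mem_of_mem _ hr _ (by omega))
  have hmem : r ^ i * (1 - r ^ (j - i)) ∈ I := by
    rw [mul_sub, mul_one, ← pow_add, Nat.add_sub_cancel' hlt.le, ← Ideal.Quotient.eq]
    exact heq
  exact ⟨i, (Ideal.mul_unit_mem_iff_mem I hunit).mp hmem⟩

theorem pow_pow_sub_one_mem_maximalIdeal_pow {p : ℕ} (hp : (p : R) ∈ maximalIdeal R) {u : R}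
    (hu : u - 1 ∈ maximalIdeal R) (n : ℕ) : u ^ p ^ n - 1 ∈ maximalIdeal R ^ (n + 1) := by
  induction n with
  | zero => simpa using hu
  | succ n ih =>
    have hv : residue R (u ^ p ^ n) = 1 := by
      rw [← sub_eq_zero, ← map_one (residue R), ← map_sub, residue_eq_zero_iff]
      exact Ideal.pow_le_self n.succ_ne_zero ih
    have hsum : ∑ i ∈ Finset.range p, (u ^ p ^ n) ^ i ∈ maximalIdeal R := by
      rw [← residue_eq_zero_iff, map_sum]
      simpa [hv] using (residue_eq_zero_iff _).mpr hp
    rw [pow_succ p n, pow_mul, ← geom_sum_mul, pow_succ' (maximalIdeal R)]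
    exact Ideal.mul_mem_mul hsum ih

theorem exists_dvd_of_card_quotient_le [IsDomain R] [IsNoetherianRing R] {ω : ℕ → R}
    (hω_dvd : ∀ {n m}, n ≤ m → ω n ∣ ω m)
    (hω_mem : ∀ n, ω n ∈ maximalIdeal R ^ n) {a b : R} (ha : a ≠ 0) {C : ℕ}
    (hfin : ∀ n, Finite (R ⧸ Ideal.span {a * b, ω n}))
    (hC : ∀ n, Nat.card (R ⧸ Ideal.span {a * b, ω n}) ≤
      C * Nat.card (R ⧸ Ideal.span {a, ω n})) :
    ∃ N, b ∣ ω N := by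
  set I : ℕ → Ideal R := fun n => Ideal.span {a * b, ω n}
  have hω_mem_I : ∀ {n m}, n ≤ m → ω m ∈ I n := fun h =>
    Ideal.mem_of_dvd _ (hω_dvd h) (Ideal.subset_span (by simp))
  have hI_anti : Antitone I := fun n m h => Ideal.span_le.mpr <| by
    rintro x (rfl | rfl)
    exacts [Ideal.subset_span (by simp), hω_mem_I h]
  have hI_le : ∀ n, I n ≤ Ideal.span {a * b} ⊔ maximalIdeal R ^ n := fun n =>
    Ideal.span_le.mpr <| by
      rintro x (rfl | rfl)
      exacts [Ideal.mem_sup_left (Ideal.mem_span_singleton_self _),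
        Ideal.mem_sup_right (hω_mem n)]
  have hI_le_span : ∀ n, I n ≤ Ideal.span {a, ω n} := fun n => Ideal.span_le.mpr <| by
    rintro x (rfl | rfl)
    exacts [Ideal.mul_mem_right _ _ (Ideal.subset_span (by simp)), Ideal.subset_span (by simp)]
  obtain ⟨N, hN⟩ := AddSubgroup.exists_eq_of_antitone_of_index_le
    (K := fun n => ((I n).colon {a}).toAddSubgroup)
    (fun n m h => Submodule.colon_mono (hI_anti h) subset_rfl)
    (fun n => ne_zero_of_dvd_ne_zero (AddSubgroup.index_ne_zero_of_finite (hH := hfin n))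
      (AddSubgroup.index_dvd_of_le (Ideal.le_colon (I := I n))))
    (fun n => have := hfin n; Ideal.card_quotient_colon_singleton_le (hI_le_span n)
      (Ideal.subset_span (by simp)) (hC n))
  have hmem : ∀ n ≥ N, ω N * a ∈ I n := fun n hn => by
    have : ω N ∈ (I n).colon {a} := by
      rw [← Submodule.mem_toAddSubgroup, show _ = _ from hN n hn]
      exact Submodule.mem_colon_singleton.mpr (Ideal.mul_mem_right _ _ (hω_mem_I le_rfl))
    exact Submodule.mem_colon_singleton.mp this
  have hmem_span : ω N * a ∈ Ideal.span {a * b} :=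
    mem_of_forall_mem_sup_maximalIdeal_pow fun n =>
      sup_le_sup_left (Ideal.pow_le_pow_right (le_max_left n N)) (Ideal.span {a * b})
        (hI_le _ (hmem _ (le_max_right n N)))
  rw [Ideal.mem_span_singleton, mul_comm (ω N)] at hmem_span
  exact ⟨N, (mul_dvd_mul_iff_left ha).mp hmem_span⟩

end IsLocalRing

namespace PowerSeries

variable {A : Type*} [CommRing A] [IsLocalRing A]

theorem mem_maximalIdeal_iff {f : A⟦X⟧} :
    f ∈ maximalIdeal A⟦X⟧ ↔ constantCoeff f ∈ maximalIdeal A :=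
  not_congr isUnit_iff_constantCoeff

theorem isUnit_of_finite_quotient [IsDomain A] {π : A} (hπ0 : π ≠ 0) (hπ : π ∈ maximalIdeal A)
    (b : A⟦X⟧)
    [Finite (A⟦X⟧ ⧸ Ideal.span {b})] : IsUnit b := by
  obtain ⟨i, hi⟩ := exists_pow_mem_of_finite_quotient (I := Ideal.span {b})
    ((mem_maximalIdeal_iff (f := C π)).mpr (by simpa using hπ))
  obtain ⟨j, hj⟩ := exists_pow_mem_of_finite_quotient (I := Ideal.span {b})
    ((mem_maximalIdeal_iff (f := X)).mpr (by simp))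
  rw [Ideal.mem_span_singleton] at hi hj
  obtain ⟨_ | k, -, hk⟩ := (dvd_prime_pow X_prime j).mp hj
  · simpa using hk
  · have hX : (X : A⟦X⟧) ∣ C π ^ i := (dvd_pow_self X k.succ_ne_zero).trans (hk.dvd'.trans hi)
    rw [X_dvd_iff, map_pow, constantCoeff_C] at hX
    exact absurd (pow_eq_zero_iff'.mp hX).1 hπ0

end PowerSeries

/-- If `a₁ ∣ a₂` in `Λ = ℤ_p[[X]]` and for every `n` the quotients
`Λ/(aᵢ, (1+X)^{p^n} - 1)` (which realize `Λ/aᵢΛ ⊗_Λ Λ_n`) are finite with ratio of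
cardinalities bounded above and below independently of `n`, then `a₁Λ = a₂Λ`. -/
theorem stmt8 (p : ℕ) [Fact p.Prime] (a₁ a₂ : PowerSeries ℤ_[p])
    (hdvd : a₁ ∣ a₂)
    (hfin : ∀ n : ℕ,
      Finite (PowerSeries ℤ_[p] ⧸ Ideal.span
        {a₁, (1 + PowerSeries.X : PowerSeries ℤ_[p]) ^ p ^ n - 1}) ∧
      Finite (PowerSeries ℤ_[p] ⧸ Ideal.span
        {a₂, (1 + PowerSeries.X : PowerSeries ℤ_[p]) ^ p ^ n - 1}))
    (hbound : ∃ C : ℕ, 0 < C ∧ ∀ n : ℕ,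
      Nat.card (PowerSeries ℤ_[p] ⧸ Ideal.span
          {a₂, (1 + PowerSeries.X : PowerSeries ℤ_[p]) ^ p ^ n - 1}) ≤
        C * Nat.card (PowerSeries ℤ_[p] ⧸ Ideal.span
          {a₁, (1 + PowerSeries.X : PowerSeries ℤ_[p]) ^ p ^ n - 1}) ∧
      Nat.card (PowerSeries ℤ_[p] ⧸ Ideal.span
          {a₁, (1 + PowerSeries.X : PowerSeries ℤ_[p]) ^ p ^ n - 1}) ≤
        C * Nat.card (PowerSeries ℤ_[p] ⧸ Ideal.span
          {a₂, (1 + PowerSeries.X : PowerSeries ℤ_[p]) ^ p ^ n - 1})) :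
    Ideal.span {a₁} = Ideal.span {a₂} := by
  obtain ⟨b, rfl⟩ := hdvd
  obtain ⟨C, -, hC⟩ := hbound
  rcases eq_or_ne a₁ 0 with rfl | ha₁
  · simp
  have hp : (p : ℤ_[p]) ∈ maximalIdeal ℤ_[p] := by
    rw [PadicInt.maximalIdeal_eq_span_p]
    exact Ideal.mem_span_singleton_self _
  have hpX : (p : ℤ_[p]⟦X⟧) ∈ maximalIdeal ℤ_[p]⟦X⟧ :=
    mem_maximalIdeal_iff.mpr (by rw [map_natCast]; exact hp)
  have hX : (1 + X : ℤ_[p]⟦X⟧) - 1 ∈ maximalIdeal ℤ_[p]⟦X⟧ := by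
    rw [add_sub_cancel_left, mem_maximalIdeal_iff, constantCoeff_X]
    exact zero_mem _
  have hω_mem (n : ℕ) : (1 + X : ℤ_[p]⟦X⟧) ^ p ^ n - 1 ∈ maximalIdeal ℤ_[p]⟦X⟧ ^ n :=
    Ideal.pow_le_pow_right n.le_succ <| pow_pow_sub_one_mem_maximalIdeal_pow hpX hX n
  obtain ⟨N, hN⟩ := exists_dvd_of_card_quotient_le
    (fun h => dvd_pow_sub_one_of_dvd (pow_dvd_pow p h)) hω_mem ha₁
    (fun n => (hfin n).2) (fun n => (hC n).1)
  have : Finite (ℤ_[p]⟦X⟧ ⧸ Ideal.span {b}) := by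
    have := (hfin N).2
    refine Finite.of_surjective _ (Ideal.Quotient.factor_surjective
      (S := Ideal.span {a₁ * b, (1 + X) ^ p ^ N - 1}) (Ideal.span_le.mpr ?_))
    rintro x (rfl | rfl)
    exacts [Ideal.mem_span_singleton.mpr (dvd_mul_left b a₁), Ideal.mem_span_singleton.mpr hN]
  have hb : IsUnit b :=
    isUnit_of_finite_quotient (Nat.cast_ne_zero.mpr (Fact.out : p.Prime).ne_zero) hp b
  exact (Ideal.span_singleton_mul_right_unit hb a₁).symm
end

section
/- Let O be a complete discrete valuation ring with uniformizer π, and [π](T) ∈ O[[T]] a Lubin–Tate series for π (so [π](T) ≡ πT mod deg 2 and [π](T) ≡ T^q mod π, q the residue cardinality). Write [π^{n+1}](T) for the (n+1)-fold composite and h(T) := [π^{n+1}](T)/[π^n](T) (which lies in O[T] as [π^n](T) divides [π^{n+1}](T)). Then h(T) ≡ π·h₁(T) mod [π^n](T) for some polynomial h₁ ∈ O[T]; equivalently, the image of h in O[T]/([π^n](T)) is divisible by π. -/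
/-!
Reduce modulo `π`. Since `f ≡ T^q`, the iterates satisfy `[π^m](T) ≡ T^(q^m)`, so reducing
`[π^(n+1)] = [π^n] · h` gives `T^(q^(n+1)) = T^(q^n) · h̄`; cancelling the regular element
`T^(q^n)` leaves `h ≡ [π^n]^(q-1) mod π`, and `[π^n]^(q-1)` is a multiple of `[π^n]` as `q ≥ 2`.
-/

open Polynomial

namespace Polynomial

theorem map_quotient_span_singleton_eq_zero_iff {R : Type*} [CommRing R] {π : R} {p : R[X]} :
    p.map (Ideal.Quotient.mk (Ideal.span {π})) = 0 ↔ C π ∣ p := by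
  rw [C_dvd_iff_dvd_coeff, Polynomial.ext_iff]
  simp only [coeff_map, coeff_zero, Ideal.Quotient.eq_zero_iff_mem, Ideal.mem_span_singleton]

theorem map_iterate_comp_eq_X_pow {R S : Type*} [CommSemiring R] [CommSemiring S] (φ : R →+* S)
    {f : R[X]} {q : ℕ} (hf : f.map φ = X ^ q) {F : ℕ → R[X]} (hF0 : F 0 = X)
    (hFs : ∀ m, F (m + 1) = f.comp (F m)) (m : ℕ) : (F m).map φ = X ^ q ^ m := by
  induction m with
  | zero => simp [hF0]
  | succ m ih => rw [hFs, map_comp, hf, ih, X_pow_comp, ← pow_mul, pow_succ]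

end Polynomial

theorem stmt12_general (O : Type*) [CommRing O]
    (π : O) (q : ℕ) (hq : 2 ≤ q)
    (f : Polynomial O)
    (hfq : ∀ i : ℕ, π ∣ (f - Polynomial.X ^ q).coeff i)
    (Fn : ℕ → Polynomial O) (hF0 : Fn 0 = Polynomial.X)
    (hFs : ∀ m : ℕ, Fn (m + 1) = f.comp (Fn m))
    (n : ℕ) (h : Polynomial O) (hh : Fn (n + 1) = Fn n * h) :
    ∃ h₁ : Polynomial O, h - Polynomial.C π * h₁ ∈ Ideal.span {Fn n} := by
  set φ := Ideal.Quotient.mk (Ideal.span {π})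
  have hf : f.map φ = X ^ q := by
    rw [← sub_eq_zero, ← Polynomial.map_X φ, ← Polynomial.map_pow, ← Polynomial.map_sub,
      map_quotient_span_singleton_eq_zero_iff, C_dvd_iff_dvd_coeff]
    exact hfq
  have hFn := map_iterate_comp_eq_X_pow φ hf hF0 hFs
  have hh_mod : X ^ q ^ n * h.map φ = X ^ q ^ n * (Fn n ^ (q - 1)).map φ := by
    rw [← hFn, ← Polynomial.map_mul, ← hh, Polynomial.map_pow, hFn, hFn, ← pow_mul, ← pow_add,
      ← mul_one_add, Nat.add_sub_cancel' (by omega : 1 ≤ q), ← pow_succ]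
  obtain ⟨h₁, hh₁⟩ : C π ∣ h - Fn n ^ (q - 1) := by
    rw [← map_quotient_span_singleton_eq_zero_iff, Polynomial.map_sub, sub_eq_zero]
    exact (isRegular_X_pow _).left hh_mod
  refine ⟨h₁, Ideal.mem_span_singleton.2 ?_⟩
  rw [← hh₁, sub_sub_cancel]
  exact dvd_pow_self _ (by omega)

/-- Lubin–Tate divisibility: let `O` be a (complete) discrete valuation ring with
uniformizer `π` and residue cardinality `q`, and let `f = [π](T)` be a Lubin–Tate
(polynomial) series for `π`, so `f ≡ πT mod deg 2` and `f ≡ T^q mod π`.  Let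
`Fn m = [π^m](T)` be the `m`-fold composite (`Fn 0 = T`, `Fn (m+1) = f ∘ Fn m`), and let
`h = [π^{n+1}]/[π^n]`, i.e. `Fn (n+1) = Fn n · h`.  Then `h ≡ π·h₁ mod [π^n](T)` for some
`h₁ ∈ O[T]`: the image of `h` in `O[T]/([π^n](T))` is divisible by `π`. -/
theorem stmt12 (O : Type*) [CommRing O] [IsDomain O] [IsDiscreteValuationRing O]
    (π : O) (hπ : Irreducible π) (q : ℕ) (hq : 2 ≤ q)
    (f : Polynomial O) (hf0 : f.coeff 0 = 0) (hf1 : f.coeff 1 = π)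
    (hfq : ∀ i : ℕ, π ∣ (f - Polynomial.X ^ q).coeff i)
    (Fn : ℕ → Polynomial O) (hF0 : Fn 0 = Polynomial.X)
    (hFs : ∀ m : ℕ, Fn (m + 1) = f.comp (Fn m))
    (n : ℕ) (h : Polynomial O) (hh : Fn (n + 1) = Fn n * h) :
    ∃ h₁ : Polynomial O, h - Polynomial.C π * h₁ ∈ Ideal.span {Fn n} :=
  stmt12_general O π q hq f hfq Fn hF0 hFs n h hh
end

section
/- Let G be a finite abelian group acting on an abelian group A (written multiplicatively), M ≥ 1 an integer, G = Π_{i=1}^r G_i with each G_i cyclic of order M generated by σ_i, and g ∈ A. Define N_i = Σ_{τ∈G_i} τ and D_i = Σ_{j=1}^{M-1} j σ_i^j in ℤ[G]. Suppose for each i there exists an element g_i ∈ A^{G_i} (fixed by G_i) and φ_i ∈ ℤ[G] acting trivially modulo the relevant quotient such that N_i g = (1 - φ_i) g_i with φ_i g_i defined and all elements of A^G become M-th powers appropriately. Then for r = 1: (1 - σ₁)·D₁·g ≡ -(1 - φ₁)g₁ (mod A^M), and if g₁ is fixed by the whole group and φ₁ acts trivially on g₁, then (1-σ₁)D₁g ∈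 A^M. More generally, by induction, (1-σ)·(Π_i D_i)·g ∈ A^M for every σ ∈ G, i.e., the class of (Π_i D_i)·g in A/A^M is G-invariant. -/
/-- The norm operator `N_i a = ∏_{j=0}^{M-1} σ_i^j • a`. -/
def Nop {G A : Type*} [Group G] [CommGroup A] [MulDistribMulAction G A]
    (σ : G) (M : ℕ) (a : A) : A :=
  ∏ j ∈ Finset.range M, (σ ^ j) • a

/-- Kolyvagin's derivative operator `D_i a = ∏_{j=1}^{M-1} (σ_i^j • a)^j`. -/
def Dop {G A : Type*} [Group G] [CommGroup A] [MulDistribMulAction G A]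
    (σ : G) (M : ℕ) (a : A) : A :=
  ∏ j ∈ Finset.range M, ((σ ^ j) • a) ^ j

/-- The composite derivative operator `D_S = ∏_{i ∈ S} D_i`. -/
noncomputable def DFull {G A : Type*} [Group G] [CommGroup A] [MulDistribMulAction G A] {r : ℕ}
    (σ : Fin r → G) (M : ℕ) (S : Finset (Fin r)) (a : A) : A :=
  S.toList.foldr (fun i b => Dop (σ i) M b) a

/-!
Write `N`, `D` for the norm and derivative operators of a generator `σ` of order `M`.
Telescoping gives `(σ - 1) D = M - N`, so for `y = D_j x` with `x = D_{S ∖ j} (g S)` we get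
`σ_j y / y = x ^ M / N_j x`. Since the operators commute, the norm relation turns `N_j x` into
`(1 - Frob_j) D_{S ∖ j} (g (S ∖ j))`, which is an `M`-th power by induction on `S`.
Generators outside `S` fix `D_S (g S)`, and the elements of `G` acting trivially on
`D_S (g S)` modulo `A ^ M` form a subgroup, hence all of `G`.
-/

open Finset

section Group

variable {G A : Type*} [Group G] [CommGroup A] [MulDistribMulAction G A]

def stabilizerMod (H : Subgroup A) (hH : ∀ (τ : G), ∀ h ∈ H, τ • h ∈ H) (y : A) :
    Subgroup G where
  carrier := {τ | τ • y / y ∈ H}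
  one_mem' := by simp
  mul_mem' {τ τ'} hτ hτ' := by
    have : (τ * τ') • y / y = τ • (τ' • y / y) * (τ • y / y) := by
      rw [mul_smul, smul_div', div_mul_div_cancel]
    change _ ∈ H
    rw [this]
    exact H.mul_mem (hH τ _ hτ') hτ
  inv_mem' {τ} hτ := by
    have : τ⁻¹ • y / y = (τ⁻¹ • (τ • y / y))⁻¹ := by
      rw [smul_div', inv_smul_smul, inv_div]
    change _ ∈ H
    rw [this]
    exact H.inv_mem (hH _ _ hτ)

theorem smul_div_self_mem_of_closure_eq_top {H : Subgroup A}
    (hH : ∀ (τ : G), ∀ h ∈ H, τ • h ∈ H) {s : Set G} (hs : Subgroup.closure s = ⊤) {y : A}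
    (hy : ∀ σ ∈ s, σ • y / y ∈ H) (τ : G) : τ • y / y ∈ H := by
  have : Subgroup.closure s ≤ stabilizerMod H hH y := (Subgroup.closure_le _).mpr hy
  exact this (hs ▸ Subgroup.mem_top τ)

theorem smul_mem_range_powMonoidHom (M : ℕ) (τ : G) :
    ∀ h ∈ (powMonoidHom M : A →* A).range, τ • h ∈ (powMonoidHom M : A →* A).range := by
  rintro _ ⟨a, rfl⟩
  exact ⟨τ • a, (smul_pow' τ a M).symm⟩

variable (σ : G) (M : ℕ)

def dopHom : A →* A where
  toFun := Dop σ M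
  map_one' := by simp [Dop]
  map_mul' a b := by simp [Dop, smul_mul', mul_pow, prod_mul_distrib]

def nopHom : A →* A where
  toFun := Nop σ M
  map_one' := by simp [Nop]
  map_mul' a b := by simp [Nop, smul_mul', prod_mul_distrib]

theorem map_Dop (f : A →* A) (hf : ∀ (τ : G) (a : A), f (τ • a) = τ • f a) (a : A) :
    f (Dop σ M a) = Dop σ M (f a) := by
  simp only [Dop, map_prod, map_pow, hf]

theorem map_Nop (f : A →* A) (hf : ∀ (τ : G) (a : A), f (τ • a) = τ • f a) (a : A) :
    f (Nop σ M a) = Nop σ M (f a) := by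
  simp only [Nop, map_prod, hf]

/-- `(σ - 1) D = M - N` in `ℤ[⟨σ⟩]`, written multiplicatively. -/
theorem smul_Dop_div_Dop (hσ : σ ^ M = 1) (a : A) :
    σ • Dop σ M a / Dop σ M a = a ^ M / Nop σ M a := by
  have shift : ∀ f : ℕ → A, ∏ j ∈ range M, f (j + 1) = (∏ j ∈ range M, f j) * f M / f 0 :=
    fun f => by rw [← prod_range_succ, prod_range_succ', mul_div_cancel_right]
  have hsmul : σ • Dop σ M a =
      (∏ j ∈ range M, ((σ ^ (j + 1)) • a) ^ (j + 1)) / ∏ j ∈ range M, (σ ^ (j + 1)) • a := by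
    rw [Dop, smul_prod', ← prod_div_distrib]
    refine prod_congr rfl fun j _ => ?_
    rw [smul_pow', smul_smul, ← pow_succ', pow_succ ((σ ^ (j + 1)) • a) j, mul_div_cancel_right]
  rw [hsmul, shift (fun j => ((σ ^ j) • a) ^ j), shift (fun j => (σ ^ j) • a)]
  simp only [hσ, pow_zero, one_smul, div_one, mul_div_cancel_right]
  rw [← Dop, ← Nop, mul_div_assoc, mul_div_cancel_left]

end Group

section CommGroup

variable {G A : Type*} [CommGroup G] [CommGroup A] [MulDistribMulAction G A]

theorem smul_Dop (σ τ : G) (M : ℕ) (a : A) : τ • Dop σ M a = Dop σ M (τ • a) :=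
  map_Dop σ M (MulDistribMulAction.toMonoidHom A τ) (fun _ _ => smul_comm _ _ _) a

theorem smul_Nop (σ τ : G) (M : ℕ) (a : A) : τ • Nop σ M a = Nop σ M (τ • a) :=
  map_Nop σ M (MulDistribMulAction.toMonoidHom A τ) (fun _ _ => smul_comm _ _ _) a

theorem Dop_Dop_comm (σ σ' : G) (M : ℕ) (a : A) :
    Dop σ M (Dop σ' M a) = Dop σ' M (Dop σ M a) :=
  map_Dop σ' M (dopHom σ M) (fun τ a => (smul_Dop σ τ M a).symm) a

theorem Nop_Dop_comm (σ σ' : G) (M : ℕ) (a : A) :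
    Nop σ M (Dop σ' M a) = Dop σ' M (Nop σ M a) :=
  map_Dop σ' M (nopHom σ M) (fun τ a => (smul_Nop σ τ M a).symm) a

variable {r : ℕ} (σ : Fin r → G) (M : ℕ)

theorem map_DFull (f : A →* A) (hf : ∀ i a, f (Dop (σ i) M a) = Dop (σ i) M (f a))
    (S : Finset (Fin r)) (a : A) : f (DFull σ M S a) = DFull σ M S (f a) := by
  rw [DFull, DFull]
  induction S.toList with
  | nil => rfl
  | cons i l ih => simp only [List.foldr_cons, hf, ih]

theorem DFull_div (S : Finset (Fin r)) (a b : A) :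
    DFull σ M S (a / b) = DFull σ M S a / DFull σ M S b := by
  rw [DFull, DFull, DFull]
  induction S.toList with
  | nil => rfl
  | cons i l ih =>
    rw [List.foldr_cons, List.foldr_cons, List.foldr_cons, ih]
    exact map_div (dopHom (A := A) (σ i) M) _ _

theorem smul_DFull (τ : G) (S : Finset (Fin r)) (a : A) :
    τ • DFull σ M S a = DFull σ M S (τ • a) :=
  map_DFull σ M (MulDistribMulAction.toMonoidHom A τ) (fun i => smul_Dop (σ i) τ M) S a

theorem Nop_DFull (s : G) (S : Finset (Fin r)) (a : A) :
    Nop s M (DFull σ M S a) = DFull σ M S (Nop s M a) :=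
  map_DFull σ M (nopHom s M) (fun i => Nop_Dop_comm s (σ i) M) S a

theorem DFull_insert {j : Fin r} {S : Finset (Fin r)} (hj : j ∉ S) (a : A) :
    DFull σ M (insert j S) a = Dop (σ j) M (DFull σ M S a) := by
  have : LeftCommutative fun (i : Fin r) (b : A) => Dop (σ i) M b :=
    ⟨fun i i' b => Dop_Dop_comm (σ i) (σ i') M b⟩
  rw [DFull, (toList_insert hj).foldr_eq]
  rfl

end CommGroup

section EulerSystem

variable {G A : Type*} [CommGroup G] [CommGroup A] [MulDistribMulAction G A] {r M : ℕ}
  {σ Frob : Fin r → G} {g : Finset (Fin r) → A}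

theorem smul_DFull_div_DFull_mem_of_mem {S : Finset (Fin r)} {j : Fin r} (hj : j ∈ S)
    (hσ : σ j ^ M = 1)
    (hrel : Nop (σ j) M (g S) = g (S.erase j) / (Frob j • g (S.erase j)))
    (ih : Frob j • DFull σ M (S.erase j) (g (S.erase j)) / DFull σ M (S.erase j) (g (S.erase j))
      ∈ (powMonoidHom M : A →* A).range) :
    σ j • DFull σ M S (g S) / DFull σ M S (g S) ∈ (powMonoidHom M : A →* A).range := by
  set x := DFull σ M (S.erase j) (g S)
  have hy : DFull σ M S (g S) = Dop (σ j) M x := by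
    rw [← DFull_insert σ M (notMem_erase j S), insert_erase hj]
  have hN : Nop (σ j) M x = (Frob j • DFull σ M (S.erase j) (g (S.erase j)) /
      DFull σ M (S.erase j) (g (S.erase j)))⁻¹ := by
    rw [Nop_DFull, hrel, DFull_div, smul_DFull, inv_div]
  rw [hy, smul_Dop_div_Dop _ _ hσ, hN, div_inv_eq_mul]
  exact mul_mem ⟨x, rfl⟩ ih

theorem smul_DFull_div_DFull_mem (hσ : ∀ i, σ i ^ M = 1)
    (hgen : Subgroup.closure (Set.range σ) = ⊤)
    (hfix : ∀ (S : Finset (Fin r)) (i : Fin r), i ∉ S → σ i • g S = g S)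
    (hrel : ∀ (S : Finset (Fin r)) (i : Fin r), i ∈ S →
      Nop (σ i) M (g S) = g (S.erase i) / (Frob i • g (S.erase i)))
    (S : Finset (Fin r)) (τ : G) :
    τ • DFull σ M S (g S) / DFull σ M S (g S) ∈ (powMonoidHom M : A →* A).range := by
  induction S using Finset.strongInduction generalizing τ with
  | H S ih =>
    refine smul_div_self_mem_of_closure_eq_top (smul_mem_range_powMonoidHom M) hgen ?_ τ
    rintro _ ⟨j, rfl⟩
    by_cases hj : j ∈ S
    · exact smul_DFull_div_DFull_mem_of_mem hj (hσ j) (hrel S j hj) (ih _ (erase_ssubset hj) _)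
    · rw [smul_DFull, hfix S j hj, div_self']
      exact one_mem _

end EulerSystem

theorem stmt16_general {G A : Type*} [CommGroup G] [CommGroup A] [MulDistribMulAction G A]
    (M r : ℕ) (σ Frob : Fin r → G)
    (hord : ∀ i, orderOf (σ i) = M)
    (hgen : Subgroup.closure (Set.range σ) = (⊤ : Subgroup G))
    (g : Finset (Fin r) → A)
    (hfix : ∀ (S : Finset (Fin r)) (i : Fin r), i ∉ S → σ i • g S = g S)
    (hrel : ∀ (S : Finset (Fin r)) (i : Fin r), i ∈ S →
      Nop (σ i) M (g S) = g (S.erase i) / (Frob i • g (S.erase i))) :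
    ∀ τ : G, ∃ a : A,
      (τ • DFull σ M Finset.univ (g Finset.univ)) /
          DFull σ M Finset.univ (g Finset.univ) = a ^ M := by
  intro τ
  obtain ⟨a, ha⟩ := smul_DFull_div_DFull_mem (fun i => hord i ▸ pow_orderOf_eq_one (σ i))
    hgen hfix hrel univ τ
  exact ⟨a, ha.symm⟩

/-- Abstract Kolyvagin derivative lemma: `G ≅ (ℤ/M)^r` acts on the abelian group `A` via
the generators `σ i`, and `g S` (for `S ⊆ {1,…,r}`) is an Euler system, i.e. `g S` is
fixed by the `σ i` with `i ∉ S` and satisfies the norm relations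
`N_i (g S) = (1 - Frob_i)·g (S∖{i})`.  Then for the full derivative `D = ∏_i D_i`,
the element `(1 - σ)·D·g` is an `M`-th power for every `σ ∈ G`; that is, the class of
`D·(g {1,…,r})` in `A/A^M` is `G`-invariant. -/
theorem stmt16 {G A : Type*} [CommGroup G] [CommGroup A] [MulDistribMulAction G A]
    (M r : ℕ) (hM : 1 ≤ M) (σ Frob : Fin r → G)
    (hord : ∀ i, orderOf (σ i) = M)
    (hgen : Subgroup.closure (Set.range σ) = (⊤ : Subgroup G))
    (g : Finset (Fin r) → A)
    (hfix : ∀ (S : Finset (Fin r)) (i : Fin r), i ∉ S → σ i • g S = g S)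
    (hrel : ∀ (S : Finset (Fin r)) (i : Fin r), i ∈ S →
      Nop (σ i) M (g S) = g (S.erase i) / (Frob i • g (S.erase i))) :
    ∀ τ : G, ∃ a : A,
      (τ • DFull σ M Finset.univ (g Finset.univ)) /
          DFull σ M Finset.univ (g Finset.univ) = a ^ M :=
  stmt16_general M r σ Frob hord hgen g hfix hrel
end
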